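/- arXiv:1203.4177 — 2 statements merged into one kernel-verified Lean document; each statement's English description precedes it below -/
import Mathlib

section
/- Assume the clearing condition holds for every area a ∈ A and hour t ∈ T. Define the economic surplus Ω(π,β,φ,δ,τ) := ∑_{a∈A} ∑_{t∈T} [ ∑_{h∈H_{a,t}} ((p_h+Δp_h)Δq_h δ_h − ½ Δp_h Δq_h δ_h²) − π_{a,t}·( q̲_{a,t} + ∑_{h∈H_{a,t}} Δq_h δ_h ) + ∑_{b∈B_a} (p_b − π_{a,t}) q_{b,t} β_b + ∑_{f∈F_a} (p_f − π_{a,t}) q_f φ_{f,t} ] + ∑_{c∈C} ∑_{t∈T} (π_{s(c),t} − π_{r(c),t}) τ_{c,t}. Then Ω(π,β,φ,δ,τ) = ∑_{a∈A} ∑_{t∈T} ∑_{h∈H_{a,t}} ((p_h+Δp_h)Δq_h δ_h − ½ Δp_h Δq_h δ_h²) + ∑_{b∈B} ∑_{t∈T} p_b q_{b,t} β_b + ∑_{f∈F} ∑_{t∈T} p_f q_f φ_{f,t}; in particular Ω does not depend on the prices π or the flows τ. -/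
/-! Multiplying the clearing condition of area `a` in hour `t` by the price `π a t` shows that
the terms of the surplus carrying `π` add up, over all areas and hours, to minus the
price-weighted net inflow of the interconnectors. Regrouping that sum by interconnector instead
of by area turns it into minus the congestion rent `∑ (π (s c) - π (r c)) τ c`, which cancels. -/

open Finset

namespace Finset

variable {ι α κ R M : Type*} [Fintype α] [DecidableEq α]

lemma sum_sub_mul_mul [CommRing R] (s : Finset ι) (c : R) (p q x : ι → R) :
    ∑ i ∈ s, (p i - c) * q i * x i = ∑ i ∈ s, p i * q i * x i - c * ∑ i ∈ s, q i * x i := by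
  rw [mul_sum, ← sum_sub_distrib]
  exact sum_congr rfl fun _ _ => by ring

lemma sum_mul_sum_fiberwise [Fintype ι] [NonUnitalNonAssocSemiring R]
    (g : ι → α) (w : α → R) (x : ι → R) :
    ∑ a, w a * ∑ i with g i = a, x i = ∑ i, w (g i) * x i := by
  rw [← sum_fiberwise univ g]
  refine sum_congr rfl fun a _ => ?_
  rw [mul_sum]
  exact sum_congr rfl fun i hi => by rw [(mem_filter.mp hi).2]

lemma sum_sum_sum_fiberwise [Fintype ι] [Fintype κ] [AddCommMonoid M]
    (g : ι → α) (f : ι → κ → M) :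
    ∑ a, ∑ t, ∑ i with g i = a, f i t = ∑ i, ∑ t, f i t := by
  rw [← sum_fiberwise univ g]
  exact sum_congr rfl fun _ _ => sum_comm

end Finset

section NetInflow

variable {A C R : Type*} [Fintype A] [Fintype C] [DecidableEq A]

def netInflow [AddCommGroup R] (r s : C → A) (τ : C → R) (a : A) : R :=
  ∑ c with s c = a, τ c - ∑ c with r c = a, τ c

/-- Summation by parts on a graph: the incidence matrix is adjoint to the gradient. -/
lemma sum_mul_netInflow [CommRing R] (r s : C → A) (τ : C → R) (π : A → R) :
    ∑ a, π a * netInflow r s τ a = ∑ c, (π (s c) - π (r c)) * τ c := by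
  simp only [netInflow, mul_sub, sum_sub_distrib, sum_mul_sum_fiberwise, sub_mul]

end NetInflow

/-- Under the clearing condition, the economic surplus (hourly surplus,
block and flex bid surplus, and congestion rent) simplifies to an expression that does
not depend on the prices `π` or the flows `τ`. -/
theorem economic_surplus_simplification
    {A T H B F C : Type*} [Fintype A] [Fintype T] [Fintype H] [Fintype B] [Fintype F]
    [Fintype C] [DecidableEq A] [DecidableEq T]
    (areaH : H → A) (hourH : H → T) (areaB : B → A) (areaF : F → A)
    (r s : C → A)
    (p Δp Δq : H → ℝ) (qmin : A → T → ℝ)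
    (pB : B → ℝ) (qB : B → T → ℝ) (pF : F → ℝ) (qF : F → ℝ)
    (π : A → T → ℝ) (β : B → ℝ) (φ : F → T → ℝ) (δ : H → ℝ) (τ : C → T → ℝ)
    (hclear : ∀ (a : A) (t : T),
      qmin a t
        + ∑ h ∈ Finset.univ.filter (fun h => areaH h = a ∧ hourH h = t), Δq h * δ h
        + ∑ b ∈ Finset.univ.filter (fun b => areaB b = a), qB b t * β b
        + ∑ f ∈ Finset.univ.filter (fun f => areaF f = a), qF f * φ f t
      = (∑ c ∈ Finset.univ.filter (fun c => s c = a), τ c t)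
        - ∑ c ∈ Finset.univ.filter (fun c => r c = a), τ c t) :
    ((∑ a : A, ∑ t : T,
        ((∑ h ∈ Finset.univ.filter (fun h => areaH h = a ∧ hourH h = t),
            ((p h + Δp h) * Δq h * δ h - (1 / 2) * Δp h * Δq h * δ h ^ 2))
          - π a t * (qmin a t
              + ∑ h ∈ Finset.univ.filter (fun h => areaH h = a ∧ hourH h = t), Δq h * δ h)
          + (∑ b ∈ Finset.univ.filter (fun b => areaB b = a), (pB b - π a t) * qB b t * β b)
          + ∑ f ∈ Finset.univ.filter (fun f => areaF f = a), (pF f - π a t) * qF f * φ f t))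
      + ∑ c : C, ∑ t : T, (π (s c) t - π (r c) t) * τ c t)
    = (∑ a : A, ∑ t : T,
        ∑ h ∈ Finset.univ.filter (fun h => areaH h = a ∧ hourH h = t),
          ((p h + Δp h) * Δq h * δ h - (1 / 2) * Δp h * Δq h * δ h ^ 2))
      + (∑ b : B, ∑ t : T, pB b * qB b t * β b)
      + ∑ f : F, ∑ t : T, pF f * qF f * φ f t := by
  have hsummand : ∀ a t,
      (∑ h with areaH h = a ∧ hourH h = t,
            ((p h + Δp h) * Δq h * δ h - (1 / 2) * Δp h * Δq h * δ h ^ 2))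
          - π a t * (qmin a t + ∑ h with areaH h = a ∧ hourH h = t, Δq h * δ h)
          + (∑ b with areaB b = a, (pB b - π a t) * qB b t * β b)
          + ∑ f with areaF f = a, (pF f - π a t) * qF f * φ f t
        = (∑ h with areaH h = a ∧ hourH h = t,
            ((p h + Δp h) * Δq h * δ h - (1 / 2) * Δp h * Δq h * δ h ^ 2))
          + (∑ b with areaB b = a, pB b * qB b t * β b)
          + (∑ f with areaF f = a, pF f * qF f * φ f t)
          - π a t * netInflow r s (τ · t) a := by
    intro a t
    rw [sum_sub_mul_mul, sum_sub_mul_mul, netInflow, ← hclear]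
    ring
  have hrent : ∑ a, ∑ t, π a t * netInflow r s (τ · t) a
      = ∑ c, ∑ t, (π (s c) t - π (r c) t) * τ c t := by
    calc _ = ∑ t, ∑ a, π a t * netInflow r s (τ · t) a := sum_comm
      _ = ∑ t, ∑ c, (π (s c) t - π (r c) t) * τ c t :=
          sum_congr rfl fun t _ => sum_mul_netInflow r s (τ · t) (π · t)
      _ = _ := sum_comm
  simp_rw [hsummand]
  simp only [sum_add_distrib, sum_sub_distrib, hrent, sum_sum_sum_fiberwise]
  ring
end

section
/- (Price coupling through an active ramping constraint.) Let c be an interconnector with source r and sink s, ramp rate τ̃_c > 0, hours T = {0,…,n−1}, a flow τ_{c,·} with given τ_{c,−1}, and prices π. Suppose (τ, π) satisfies the flow price condition on c (i.e., there exist nonnegative multipliers μ̄, μ̲, ρ̃, ρ̰ satisfying the stationarity and complementarity equations for all hours), and suppose for some t with t+1 ∈ T: (a) τ̲_{c,t} < τ_{c,t} < τ̄_{c,t} and τ̲_{c,t+1} < τ_{c,t+1} < τ̄_{c,t+1}; (b) τ_{c,t+1} − τ_{c,t} = τ̃_c; (c) for every u ∈ T with u ≠ t+1, −τ̃_c < τ_{c,u}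 − τ_{c,u−1} < τ̃_c. Then π_{s,t} − π_{r,t} = −(π_{s,t+1} − π_{r,t+1}) and π_{r,t} ≥ π_{s,t}. -/
/-- The flow in the previous hour: for hour `0` it is the flow `τprev` in the last hour of
the previous day, otherwise the flow in hour `t - 1`. -/
def prevFlow {n : ℕ} (τprev : ℝ) (τ : Fin n → ℝ) (t : Fin n) : ℝ :=
  if _ : (t : ℕ) = 0 then τprev
  else τ ⟨(t : ℕ) - 1, Nat.lt_of_le_of_lt (Nat.sub_le _ _) t.isLt⟩

/-- The term for hour `t + 1`, present only if `t + 1` is still an hour of the day. -/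
def nextTerm {n : ℕ} (f : Fin n → ℝ) (t : Fin n) : ℝ :=
  if h : (t : ℕ) + 1 < n then f ⟨(t : ℕ) + 1, h⟩ else 0

/-!
Complementary slackness kills every multiplier except the forward ramping multiplier `ρ̃_{t+1}`:
the ATC bounds are slack in hours `t` and `t + 1`, ramping is slack in every hour other than
`t + 1`, and the backward ramping constraint in hour `t + 1` is slack because the flow rose by
`τ̃_c > 0` there. Stationarity in hour `t` then reads `π_{r,t} - π_{s,t} = ρ̃_{t+1} ≥ 0`, and in
hour `t + 1` it reads `π_{r,t+1} - π_{s,t+1} = -ρ̃_{t+1}`.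
-/

theorem prevFlow_succ {n : ℕ} (τprev : ℝ) (τ : Fin n → ℝ) (t : Fin n) (h : (t : ℕ) + 1 < n) :
    prevFlow τprev τ ⟨(t : ℕ) + 1, h⟩ = τ t := by
  simp [prevFlow]

theorem nextTerm_of_lt {n : ℕ} (f : Fin n → ℝ) (t : Fin n) (h : (t : ℕ) + 1 < n) :
    nextTerm f t = f ⟨(t : ℕ) + 1, h⟩ :=
  dif_pos h

theorem nextTerm_eq_zero {n : ℕ} {f : Fin n → ℝ} {t : Fin n}
    (hf : ∀ v : Fin n, (v : ℕ) = (t : ℕ) + 1 → f v = 0) : nextTerm f t = 0 := by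
  unfold nextTerm
  split_ifs with h
  · exact hf _ rfl
  · rfl

theorem eq_zero_of_sub_mul_eq_zero {R : Type*} [Ring R] [NoZeroDivisors R] {a b m : R}
    (h : (a - b) * m = 0) (hab : a ≠ b) : m = 0 :=
  (mul_eq_zero.mp h).resolve_left (sub_ne_zero.mpr hab)

theorem bound_multipliers_eq_zero {x lo hi μbar μlow : ℝ} (hbar : (x - hi) * μbar = 0)
    (hlow : (lo - x) * μlow = 0) (hslack : lo < x ∧ x < hi) : μbar = 0 ∧ μlow = 0 :=
  ⟨eq_zero_of_sub_mul_eq_zero hbar hslack.2.ne, eq_zero_of_sub_mul_eq_zero hlow hslack.1.ne⟩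

theorem ramp_multipliers_eq_zero {x p r ρt ρb : ℝ} (hup : (x - p - r) * ρt = 0)
    (hdown : (p - x - r) * ρb = 0) (hslack : -r < x - p ∧ x - p < r) : ρt = 0 ∧ ρb = 0 :=
  ⟨eq_zero_of_sub_mul_eq_zero hup hslack.2.ne,
    eq_zero_of_sub_mul_eq_zero hdown (by linarith [hslack.1] : p - x < r).ne⟩

theorem price_coupling_active_ramping_general {n : ℕ}
    (τlo τhi : Fin n → ℝ) (τtil : ℝ) (τprev : ℝ)
    (τ : Fin n → ℝ) (πr πs : Fin n → ℝ)
    (hfpc : ∃ μbar μlow ρt ρb : Fin n → ℝ,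
      (∀ u, 0 ≤ μbar u ∧ 0 ≤ μlow u ∧ 0 ≤ ρt u ∧ 0 ≤ ρb u) ∧
      ∀ u : Fin n,
        (μbar u - μlow u) + (ρt u - ρb u)
            + nextTerm (fun v => ρb v - ρt v) u + πr u - πs u = 0 ∧
          (τ u - τhi u) * μbar u = 0 ∧
          (τlo u - τ u) * μlow u = 0 ∧
          (τ u - prevFlow τprev τ u - τtil) * ρt u = 0 ∧
          (prevFlow τprev τ u - τ u - τtil) * ρb u = 0)
    (t : Fin n) (ht1 : (t : ℕ) + 1 < n)
    (ha : τlo t < τ t ∧ τ t < τhi t ∧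
      τlo ⟨(t : ℕ) + 1, ht1⟩ < τ ⟨(t : ℕ) + 1, ht1⟩ ∧
      τ ⟨(t : ℕ) + 1, ht1⟩ < τhi ⟨(t : ℕ) + 1, ht1⟩)
    (hb : τ ⟨(t : ℕ) + 1, ht1⟩ - τ t = τtil)
    (hc : ∀ u : Fin n, (u : ℕ) ≠ (t : ℕ) + 1 →
      -τtil < τ u - prevFlow τprev τ u ∧ τ u - prevFlow τprev τ u < τtil) :
    πs t - πr t = -(πs ⟨(t : ℕ) + 1, ht1⟩ - πr ⟨(t : ℕ) + 1, ht1⟩) ∧ πs t ≤ πr t := by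
  obtain ⟨μbar, μlow, ρt, ρb, hnonneg, hfpc⟩ := hfpc
  set t1 : Fin n := ⟨(t : ℕ) + 1, ht1⟩
  have hramp (u : Fin n) (hu : (u : ℕ) ≠ (t : ℕ) + 1) : ρt u = 0 ∧ ρb u = 0 :=
    ramp_multipliers_eq_zero (hfpc u).2.2.2.1 (hfpc u).2.2.2.2 (hc u hu)
  have hτtil : 0 < τtil := by linarith [hc t (by omega)]
  obtain ⟨hμbar, hμlow⟩ := bound_multipliers_eq_zero (hfpc t).2.1 (hfpc t).2.2.1 ⟨ha.1, ha.2.1⟩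
  obtain ⟨hμbar1, hμlow1⟩ :=
    bound_multipliers_eq_zero (hfpc t1).2.1 (hfpc t1).2.2.1 ⟨ha.2.2.1, ha.2.2.2⟩
  obtain ⟨hρt, hρb⟩ := hramp t (by omega)
  have hρb1 : ρb t1 = 0 := eq_zero_of_sub_mul_eq_zero (hfpc t1).2.2.2.2
    (by rw [prevFlow_succ]; linarith : prevFlow τprev τ t1 - τ t1 < τtil).ne
  have hnext1 : nextTerm (fun v => ρb v - ρt v) t1 = 0 := nextTerm_eq_zero fun v hv => by
    obtain ⟨hρtv, hρbv⟩ := hramp v (by rw [hv]; exact Nat.succ_ne_self _)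
    simp [hρtv, hρbv]
  have hstat := (hfpc t).1
  have hstat1 := (hfpc t1).1
  rw [nextTerm_of_lt _ t ht1, hμbar, hμlow, hρt, hρb, hρb1] at hstat
  rw [hnext1, hμbar1, hμlow1, hρb1] at hstat1
  have hρt1 := (hnonneg t1).2.2.1
  constructor <;> linarith

/-- price coupling through an active ramping constraint. If the flow
price condition holds on an interconnector, the ATC bounds are slack in hours `t` and
`t + 1`, the ramping constraint is binding in forward direction between `t` and `t + 1`,
and ramping is slack everywhere else, then the price differences in hours `t` and `t + 1`
are opposite and the source price dominates the sink price in hour `t`. -/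
theorem price_coupling_active_ramping {n : ℕ}
    (τlo τhi : Fin n → ℝ) (τtil : ℝ) (hτtil : 0 < τtil) (τprev : ℝ)
    (τ : Fin n → ℝ) (πr πs : Fin n → ℝ)
    (hfpc : ∃ μbar μlow ρt ρb : Fin n → ℝ,
      (∀ u, 0 ≤ μbar u ∧ 0 ≤ μlow u ∧ 0 ≤ ρt u ∧ 0 ≤ ρb u) ∧
      ∀ u : Fin n,
        (μbar u - μlow u) + (ρt u - ρb u)
            + nextTerm (fun v => ρb v - ρt v) u + πr u - πs u = 0 ∧
          (τ u - τhi u) * μbar u = 0 ∧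
          (τlo u - τ u) * μlow u = 0 ∧
          (τ u - prevFlow τprev τ u - τtil) * ρt u = 0 ∧
          (prevFlow τprev τ u - τ u - τtil) * ρb u = 0)
    (t : Fin n) (ht1 : (t : ℕ) + 1 < n)
    (ha : τlo t < τ t ∧ τ t < τhi t ∧
      τlo ⟨(t : ℕ) + 1, ht1⟩ < τ ⟨(t : ℕ) + 1, ht1⟩ ∧
      τ ⟨(t : ℕ) + 1, ht1⟩ < τhi ⟨(t : ℕ) + 1, ht1⟩)
    (hb : τ ⟨(t : ℕ) + 1, ht1⟩ - τ t = τtil)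
    (hc : ∀ u : Fin n, (u : ℕ) ≠ (t : ℕ) + 1 →
      -τtil < τ u - prevFlow τprev τ u ∧ τ u - prevFlow τprev τ u < τtil) :
    πs t - πr t = -(πs ⟨(t : ℕ) + 1, ht1⟩ - πr ⟨(t : ℕ) + 1, ht1⟩) ∧ πs t ≤ πr t :=
  price_coupling_active_ramping_general τlo τhi τtil τprev τ πr πs hfpc t ht1 ha hb hc
end
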